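/- Consider a closed Hilbert complex segment (W0, W1, W2, d0, d1, V0, V1) with harmonic space H, graph norms ‖·‖_{V0}, ‖·‖_{V1}, and W1-orthogonal projection P_B onto B = d0(V0). Let F : V1 → W1 be monotone and V-Lipschitz with constant C_F. Let V0h ⊆ V0 and V1h ⊆ V1 be finite-dimensional subspaces with d0(V0h) ⊆ V1h, and let π0 : V0 → V0h, π1 : V1 → V1h be linear maps that are bounded with respect to the V-norms, restrict to the identity on V0h resp. V1h, and satisfy π1(d0 τ) = d0(π0 τ) for all τ ∈ V0. Let H_h = {v ∈ V1h : d1 v = 0 and ⟨v, d0 τ⟩ = 0 for all τ ∈ V0h}. Suppose (σ, u, p) ∈ V0 × V1 × H solves the mixed semilinear problem with datum f ∈ W1, and (σ_h, u_h, p_h) ∈ V0h × V1h × H_h solves the discrete mixed semilinear problem with the same f. Then ‖σ − σ_h‖_{V0} + ‖u − u_h‖_{V1} + ‖p − p_h‖ ≤ C ( inf_{τ ∈ V0h} ‖σ − τ‖_{V0} + inf_{v ∈ V1h} ‖u − v‖_{V1} + inf_{q ∈ V1h} ‖p − q‖_{V1} + μ · inf_{v ∈ V1h} ‖P_B u − v‖_{V1}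 ), where μ = sup { ‖r − π1 r‖ : r ∈ H, ‖r‖ = 1 } and C depends only on the Poincaré constant of the complex, the V-operator norms of π0 and π1, and C_F. -/

import Mathlib

/-!
Compare both solutions with arbitrary `(τ, v, q) ∈ V0h × V1h × H_h`. The discrete error
`(s, w, r) = (σh - τ, uh - v, ph - q)` solves the discrete mixed problem whose data are the
approximation error `(σ - τ, u - v, p - q)` and the residual `F (u + p) - F (uh + ph)`. Testing
with `(s, w, r)` gives an energy inequality in which monotonicity of `F` disposes of the nonlinear
term and its Lipschitz bound controls the residual; `‖w‖` and `‖d0 s‖` are controlled through the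
discrete Hodge decomposition and the discrete Poincaré inequality, which hold with some constant
because the subcomplex is finite-dimensional. The one term not of Galerkin type is `⟪u, r⟫`:
`u ⟂ H` while `r` is only discretely harmonic. Splitting `r = P_B r + (r - P_B r)` and using the
commuting projections gives `‖P_B r‖ ≤ μ ‖r‖` and `⟪u, r⟫ = ⟪P_B u - π1 P_B u, P_B r⟫`, whence the
term `μ · inf ‖P_B u - v‖_V`. Finally an arbitrary `q ∈ V1h` is replaced by the harmonic part of
its discrete Hodge decomposition, at the cost of a constant.
-/

open scoped RealInnerProductSpace

section

variable {W0 W1 W2 : Type*}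
  [NormedAddCommGroup W0] [InnerProductSpace ℝ W0] [CompleteSpace W0]
  [NormedAddCommGroup W1] [InnerProductSpace ℝ W1] [CompleteSpace W1]
  [NormedAddCommGroup W2] [InnerProductSpace ℝ W2] [CompleteSpace W2]

/-- Membership in the harmonic space `H = {w ∈ V1 : d1 w = 0, w ⟂ d0(V0)}`. -/
def IsHarmonic (V0 : Submodule ℝ W0) {V1 : Submodule ℝ W1}
    (d0 : V0 →ₗ[ℝ] W1) (d1 : V1 →ₗ[ℝ] W2) (q : V1) : Prop :=
  d1 q = 0 ∧ ∀ τ : V0, ⟪(q : W1), d0 τ⟫ = 0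

/-- The graph (V-)norm `‖τ‖_{V0} = (‖τ‖² + ‖d0 τ‖²)^{1/2}` on the domain of `d0`. -/
noncomputable def graphNorm0 {V0 : Submodule ℝ W0} (d0 : V0 →ₗ[ℝ] W1) (τ : V0) : ℝ :=
  Real.sqrt (‖(τ : W0)‖ ^ 2 + ‖d0 τ‖ ^ 2)

/-- The graph (V-)norm `‖v‖_{V1} = (‖v‖² + ‖d1 v‖²)^{1/2}` on the domain of `d1`. -/
noncomputable def graphNorm1 {V1 : Submodule ℝ W1} (d1 : V1 →ₗ[ℝ] W2) (v : V1) : ℝ :=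
  Real.sqrt (‖(v : W1)‖ ^ 2 + ‖d1 v‖ ^ 2)

/-- `(σ, u, p)` solves the mixed semilinear problem with nonlinearity `F` and
datum `f`. -/
def IsMixedSemilinearSolution (V0 : Submodule ℝ W0) {V1 : Submodule ℝ W1}
    (d0 : V0 →ₗ[ℝ] W1) (d1 : V1 →ₗ[ℝ] W2) (F : V1 → W1) (f : W1)
    (σ : V0) (u p : V1) : Prop :=
  IsHarmonic V0 d0 d1 p ∧
  (∀ τ : V0, ⟪(σ : W0), (τ : W0)⟫ - ⟪(u : W1), d0 τ⟫ = 0) ∧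
  (∀ v : V1, ⟪d0 σ, (v : W1)⟫ + ⟪d1 u, d1 v⟫ + ⟪(p : W1), (v : W1)⟫ +
      ⟪F (u + p), (v : W1)⟫ = ⟪f, (v : W1)⟫) ∧
  (∀ q : V1, IsHarmonic V0 d0 d1 q → ⟪(u : W1), (q : W1)⟫ = 0)

/-- Membership in the discrete harmonic space
`H_h = {v ∈ V1h : d1 v = 0, v ⟂ d0(V0h)}`. -/
def IsDiscreteHarmonic {V0 : Submodule ℝ W0} {V1 : Submodule ℝ W1}
    (V0h : Submodule ℝ V0) (V1h : Submodule ℝ V1)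
    (d0 : V0 →ₗ[ℝ] W1) (d1 : V1 →ₗ[ℝ] W2) (q : V1) : Prop :=
  q ∈ V1h ∧ d1 q = 0 ∧ ∀ τ : V0, τ ∈ V0h → ⟪(q : W1), d0 τ⟫ = 0

/-- `(σ_h, u_h, p_h)` solves the discrete mixed semilinear problem on the
subcomplex `(V0h, V1h)` with nonlinearity `F` and datum `f`. -/
def IsDiscreteMixedSemilinearSolution {V0 : Submodule ℝ W0} {V1 : Submodule ℝ W1}
    (V0h : Submodule ℝ V0) (V1h : Submodule ℝ V1)
    (d0 : V0 →ₗ[ℝ] W1) (d1 : V1 →ₗ[ℝ] W2) (F : V1 → W1) (f : W1)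
    (σh : V0) (uh ph : V1) : Prop :=
  σh ∈ V0h ∧ uh ∈ V1h ∧
  IsDiscreteHarmonic V0h V1h d0 d1 ph ∧
  (∀ τ : V0, τ ∈ V0h → ⟪(σh : W0), (τ : W0)⟫ - ⟪(uh : W1), d0 τ⟫ = 0) ∧
  (∀ v : V1, v ∈ V1h → ⟪d0 σh, (v : W1)⟫ + ⟪d1 uh, d1 v⟫ + ⟪(ph : W1), (v : W1)⟫ +
      ⟪F (uh + ph), (v : W1)⟫ = ⟪f, (v : W1)⟫) ∧
  (∀ q : V1, IsDiscreteHarmonic V0h V1h d0 d1 q → ⟪(uh : W1), (q : W1)⟫ = 0)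

end

theorem le_of_sq_le_mul {x y : ℝ} (hy : 0 ≤ y) (h : x ^ 2 ≤ x * y) : x ≤ y := by
  nlinarith

theorem le_mul_of_sq_le_mul_mul_add {x S K : ℝ} (hS : 0 ≤ S) (hK : 0 ≤ K)
    (h : x ^ 2 ≤ K * S * (x + S)) : x ≤ (K + 1) * S := by
  by_contra! hlt
  nlinarith [mul_nonneg hK hS, mul_nonneg (mul_nonneg hK hS) hS]

theorem le_add_mul_ciInf {ι : Sort*} [Nonempty ι] {f : ι → ℝ} {x a b : ℝ} (hb : 0 ≤ b)
    (h : ∀ i, x ≤ a + b * f i) : x ≤ a + b * ⨅ i, f i := by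
  rw [Real.mul_iInf_of_nonneg hb]
  linarith [le_ciInf fun i => (sub_le_iff_le_add'.2 (h i))]

theorem le_mul_iInf_add_iInf_add_iInf_add_mul_iInf {ι₁ ι₂ ι₃ ι₄ : Sort*} [Nonempty ι₁]
    [Nonempty ι₂] [Nonempty ι₃] [Nonempty ι₄] {f₁ : ι₁ → ℝ} {f₂ : ι₂ → ℝ} {f₃ : ι₃ → ℝ}
    {f₄ : ι₄ → ℝ} {x C m : ℝ} (hC : 0 ≤ C) (hm : 0 ≤ m)
    (h : ∀ i j k l, x ≤ C * (f₁ i + f₂ j + f₃ k + m * f₄ l)) :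
    x ≤ C * ((⨅ i, f₁ i) + (⨅ j, f₂ j) + (⨅ k, f₃ k) + m * ⨅ l, f₄ l) := by
  have h4 : ∀ i j k, x ≤ C * (f₁ i + f₂ j + f₃ k) + C * m * ⨅ l, f₄ l := fun i j k =>
    le_add_mul_ciInf (by positivity) fun l => (h i j k l).trans_eq (by ring)
  have h3 : ∀ i j, x ≤ C * (f₁ i + f₂ j) + C * m * (⨅ l, f₄ l) + C * ⨅ k, f₃ k := fun i j =>
    le_add_mul_ciInf hC fun k => (h4 i j k).trans_eq (by ring)
  have h2 : ∀ i, x ≤ C * f₁ i + C * m * (⨅ l, f₄ l) + C * (⨅ k, f₃ k) + C * ⨅ j, f₂ j :=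
    fun i => le_add_mul_ciInf hC fun j => (h3 i j).trans_eq (by ring)
  have h1 : x ≤ C * m * (⨅ l, f₄ l) + C * (⨅ k, f₃ k) + C * (⨅ j, f₂ j) + C * ⨅ i, f₁ i :=
    le_add_mul_ciInf hC fun i => (h2 i).trans_eq (by ring)
  exact h1.trans_eq (by ring)

theorem graphNorm0_eq_graphNorm1 {W0 W1 : Type*} [NormedAddCommGroup W0] [InnerProductSpace ℝ W0]
    [NormedAddCommGroup W1] [InnerProductSpace ℝ W1] {V0 : Submodule ℝ W0} (d0 : V0 →ₗ[ℝ] W1) :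
    graphNorm0 d0 = graphNorm1 d0 :=
  rfl

section GraphNorm

variable {W1 W2 : Type*} [NormedAddCommGroup W1] [InnerProductSpace ℝ W1]
  [NormedAddCommGroup W2] [InnerProductSpace ℝ W2] {V1 : Submodule ℝ W1} (d1 : V1 →ₗ[ℝ] W2)

theorem graphNorm1_eq_norm_toLp (v : V1) :
    graphNorm1 d1 v = ‖WithLp.toLp 2 ((v : W1), d1 v)‖ := by
  rw [WithLp.prod_norm_eq_of_L2]
  rfl

theorem graphNorm1_nonneg (v : V1) : 0 ≤ graphNorm1 d1 v :=
  Real.sqrt_nonneg _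

theorem norm_le_graphNorm1 (v : V1) : ‖(v : W1)‖ ≤ graphNorm1 d1 v :=
  Real.le_sqrt_of_sq_le (le_add_of_nonneg_right (sq_nonneg _))

theorem norm_apply_le_graphNorm1 (v : V1) : ‖d1 v‖ ≤ graphNorm1 d1 v :=
  Real.le_sqrt_of_sq_le (le_add_of_nonneg_left (sq_nonneg _))

theorem graphNorm1_le_norm_add_norm (v : V1) : graphNorm1 d1 v ≤ ‖(v : W1)‖ + ‖d1 v‖ := by
  rw [graphNorm1, Real.sqrt_le_left (by positivity)]
  nlinarith [norm_nonneg (v : W1), norm_nonneg (d1 v)]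

theorem graphNorm1_of_apply_eq_zero {v : V1} (hv : d1 v = 0) : graphNorm1 d1 v = ‖(v : W1)‖ := by
  rw [graphNorm1, hv, norm_zero, zero_pow two_ne_zero, add_zero, Real.sqrt_sq (norm_nonneg _)]

theorem graphNorm1_add_le (v w : V1) :
    graphNorm1 d1 (v + w) ≤ graphNorm1 d1 v + graphNorm1 d1 w := by
  simp only [graphNorm1_eq_norm_toLp, Submodule.coe_add, map_add, ← Prod.mk_add_mk,
    WithLp.toLp_add]
  exact norm_add_le _ _

theorem graphNorm1_sub_le (v w : V1) :
    graphNorm1 d1 (v - w) ≤ graphNorm1 d1 v + graphNorm1 d1 w := by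
  simp only [graphNorm1_eq_norm_toLp, Submodule.coe_sub, map_sub, ← Prod.mk_sub_mk,
    WithLp.toLp_sub]
  exact norm_sub_le _ _

theorem graphNorm1_add_sub_add_le {u p uh ph : V1} (hp : d1 p = 0) (hph : d1 ph = 0) (v q : V1) :
    graphNorm1 d1 ((u + p) - (uh + ph)) ≤ graphNorm1 d1 (u - v) + ‖((uh - v : V1) : W1)‖ +
      ‖d1 (uh - v)‖ + ‖((p - q : V1) : W1)‖ + ‖((ph - q : V1) : W1)‖ := by
  have hsplit : (u + p) - (uh + ph) = ((u - v) - (uh - v)) + ((p - q) - (ph - q)) := by abel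
  have hd1 : d1 ((p - q) - (ph - q)) = 0 := by
    rw [sub_sub_sub_cancel_right, map_sub, hp, hph, sub_zero]
  rw [hsplit]
  refine (graphNorm1_add_le d1 _ _).trans ?_
  rw [graphNorm1_of_apply_eq_zero d1 hd1, Submodule.coe_sub]
  linarith [graphNorm1_sub_le d1 (u - v) (uh - v), graphNorm1_le_norm_add_norm d1 (uh - v),
    norm_sub_le ((p - q : V1) : W1) ((ph - q : V1) : W1)]

end GraphNorm

theorem exists_norm_le_mul_norm_apply_of_mem_orthogonal_ker {E F : Type*}
    [NormedAddCommGroup E] [InnerProductSpace ℝ E] [NormedAddCommGroup F] [NormedSpace ℝ F]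
    (K : Submodule ℝ E) [FiniteDimensional ℝ K] (g : E →ₗ[ℝ] F) :
    ∃ c, 0 ≤ c ∧ ∀ x ∈ K, x ∈ (K ⊓ LinearMap.ker g)ᗮ → ‖x‖ ≤ c * ‖g x‖ := by
  set K' := K ⊓ (K ⊓ LinearMap.ker g)ᗮ
  have : FiniteDimensional ℝ K' := Submodule.finiteDimensional_of_le inf_le_left
  have hker : LinearMap.ker (g ∘ₗ K'.subtype) = ⊥ := by
    rw [LinearMap.ker_eq_bot']
    rintro ⟨x, hxK, hx⟩ hgx
    have hx0 : ⟪x, x⟫ = 0 :=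
      Submodule.inner_right_of_mem_orthogonal (Submodule.mem_inf.2 ⟨hxK, hgx⟩) hx
    exact Subtype.ext (inner_self_eq_zero.1 hx0)
  obtain ⟨c, -, hc⟩ := (g ∘ₗ K'.subtype).exists_antilipschitzWith hker
  exact ⟨c, c.2, fun x hxK hx => hc.le_mul_norm (map_zero _) ⟨x, hxK, hx⟩⟩

theorem exists_mem_apply_eq_norm_le_mul_norm_apply {E F : Type*}
    [NormedAddCommGroup E] [InnerProductSpace ℝ E] [NormedAddCommGroup F] [NormedSpace ℝ F]
    (K : Submodule ℝ E) [FiniteDimensional ℝ K] (g : E →ₗ[ℝ] F) :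
    ∃ c, 0 ≤ c ∧ ∀ x ∈ K, ∃ y ∈ K, g y = g x ∧ ‖y‖ ≤ c * ‖g y‖ := by
  have : FiniteDimensional ℝ ↥(K ⊓ LinearMap.ker g) :=
    Submodule.finiteDimensional_of_le inf_le_left
  obtain ⟨c, hc, hpoinc⟩ := exists_norm_le_mul_norm_apply_of_mem_orthogonal_ker K g
  refine ⟨c, hc, fun x hx => ?_⟩
  obtain ⟨k, hk, y, hy, rfl⟩ := (K ⊓ LinearMap.ker g).exists_add_mem_mem_orthogonal x
  have hyK : y ∈ K := (K.add_mem_iff_right hk.1).1 hx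
  refine ⟨y, hyK, by rw [map_add, LinearMap.mem_ker.1 hk.2, zero_add], hpoinc y hyK hy⟩

section Subcomplex

variable {W0 W1 W2 : Type*}
  [NormedAddCommGroup W0] [InnerProductSpace ℝ W0]
  [NormedAddCommGroup W1] [InnerProductSpace ℝ W1]
  [NormedAddCommGroup W2] [InnerProductSpace ℝ W2]
  {V0 : Submodule ℝ W0} {V1 : Submodule ℝ W1} {d0 : V0 →ₗ[ℝ] W1} {d1 : V1 →ₗ[ℝ] W2}
  {V0h : Submodule ℝ V0} {V1h : Submodule ℝ V1}

/-- `w = d0 ρ + w_H + w_⊥` is the discrete Hodge decomposition (the two inner-product identities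
express its orthogonality), with the discrete Poincaré bounds on the potential `ρ` and on the
component `w_⊥` orthogonal to `V1h ∩ ker d1`. -/
def HasStableDiscreteHodgeDecomposition (V0h : Submodule ℝ V0) (V1h : Submodule ℝ V1)
    (d0 : V0 →ₗ[ℝ] W1) (d1 : V1 →ₗ[ℝ] W2) (c : ℝ) : Prop :=
  ∀ w ∈ V1h, ∃ ρ ∈ V0h, ∃ wH : V1, IsDiscreteHarmonic V0h V1h d0 d1 wH ∧
    ‖(ρ : W0)‖ ≤ c * ‖d0 ρ‖ ∧ ‖(w : W1) - d0 ρ - wH‖ ≤ c * ‖d1 w‖ ∧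
    ⟪(w : W1), d0 ρ⟫ = ‖d0 ρ‖ ^ 2 ∧ ⟪(w : W1), (wH : W1)⟫ = ‖(wH : W1)‖ ^ 2

theorem exists_hasStableDiscreteHodgeDecomposition (hsub : ∀ τ : V0, d0 τ ∈ V1)
    (hdd : ∀ τ : V0, d1 ⟨d0 τ, hsub τ⟩ = 0) [FiniteDimensional ℝ V0h] [FiniteDimensional ℝ V1h]
    (hd0h : ∀ τ : V0, τ ∈ V0h → (⟨d0 τ, hsub τ⟩ : V1) ∈ V1h) :
    ∃ c, 0 ≤ c ∧ HasStableDiscreteHodgeDecomposition V0h V1h d0 d1 c := by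
  set D0 := d0.codRestrict V1 hsub
  set Zh := V1h ⊓ LinearMap.ker d1
  set Bh := V0h.map D0
  have hBZ : Bh ≤ Zh := by
    rintro _ ⟨τ, hτ, rfl⟩
    exact Submodule.mem_inf.2 ⟨hd0h τ hτ, hdd τ⟩
  have : FiniteDimensional ℝ Zh := Submodule.finiteDimensional_of_le inf_le_left
  obtain ⟨c0, hc0, hpot⟩ := exists_mem_apply_eq_norm_le_mul_norm_apply V0h d0
  obtain ⟨c1, hc1, hpoinc⟩ := exists_norm_le_mul_norm_apply_of_mem_orthogonal_ker V1h d1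
  refine ⟨max c0 c1, le_max_of_le_left hc0, fun w hw => ?_⟩
  obtain ⟨z, hz, wp, hwp, rfl⟩ := Zh.exists_add_mem_mem_orthogonal w
  obtain ⟨b, hb, wH, hwH, rfl⟩ := Bh.exists_add_mem_mem_orthogonal z
  have hbZ := hBZ hb
  obtain ⟨ρ0, hρ0, rfl⟩ := hb
  obtain ⟨ρ, hρ, hρd, hρc⟩ := hpot ρ0 hρ0
  have hD0 : ((D0 ρ0 : V1) : W1) = d0 ρ := hρd.symm
  have hwHZ : wH ∈ Zh := (Zh.add_mem_iff_right hbZ).1 hz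
  have hwpV : wp ∈ V1h := (V1h.add_mem_iff_right hz.1).1 hw
  have hbwH : ⟪D0 ρ0, wH⟫ = 0 :=
    Submodule.inner_right_of_mem_orthogonal (Submodule.mem_map_of_mem hρ0) hwH
  have hbwp : ⟪D0 ρ0, wp⟫ = 0 := Submodule.inner_right_of_mem_orthogonal hbZ hwp
  have hwHwp : ⟪wH, wp⟫ = 0 := Submodule.inner_right_of_mem_orthogonal hwHZ hwp
  refine ⟨ρ, hρ, wH, ⟨hwHZ.1, hwHZ.2, fun τ hτ => ?_⟩, ?_, ?_, ?_, ?_⟩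
  · have := Submodule.inner_right_of_mem_orthogonal (Submodule.mem_map_of_mem (f := D0) hτ) hwH
    rwa [real_inner_comm] at this
  · exact hρc.trans (by gcongr; exact le_max_left _ _)
  · have hd1 : d1 (D0 ρ0 + wH + wp) = d1 wp := by
      rw [map_add, map_add, LinearMap.mem_ker.1 hbZ.2, hwHZ.2, zero_add, zero_add]
    have hcoe : ((D0 ρ0 + wH + wp : V1) : W1) - d0 ρ - wH = wp := by
      rw [Submodule.coe_add, Submodule.coe_add, hD0]
      abel
    rw [hcoe, hd1]
    exact (hpoinc wp hwpV hwp).trans (by gcongr; exact le_max_right _ _)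
  · rw [← hD0, ← Submodule.coe_norm, ← Submodule.coe_inner, inner_add_left, inner_add_left,
      real_inner_self_eq_norm_sq, real_inner_comm, hbwH, real_inner_comm, hbwp]
    ring
  · rw [← Submodule.coe_norm, ← Submodule.coe_inner, inner_add_left, inner_add_left,
      real_inner_self_eq_norm_sq, hbwH, real_inner_comm wH wp, hwHwp]
    ring

end Subcomplex

theorem norm_sub_apply_le_sSup_mul_norm {E : Type*} [NormedAddCommGroup E] [NormedSpace ℝ E]
    (H : Submodule ℝ E) (T : E →ₗ[ℝ] E) {C : ℝ} (hT : ∀ x ∈ H, ‖T x‖ ≤ C * ‖x‖)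
    {x : E} (hx : x ∈ H) :
    ‖x - T x‖ ≤ sSup {t : ℝ | ∃ r ∈ H, ‖r‖ = 1 ∧ t = ‖r - T r‖} * ‖x‖ := by
  have hbdd : BddAbove {t : ℝ | ∃ r ∈ H, ‖r‖ = 1 ∧ t = ‖r - T r‖} := by
    refine ⟨1 + C, ?_⟩
    rintro t ⟨r, hr, hr1, rfl⟩
    calc ‖r - T r‖ ≤ ‖r‖ + ‖T r‖ := norm_sub_le _ _
      _ ≤ 1 + C := by have := hT r hr; rw [hr1, mul_one] at this; linarith
  rcases eq_or_ne x 0 with rfl | hx0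
  · simp
  have hpos : 0 < ‖x‖ := norm_pos_iff.2 hx0
  have hunit := le_csSup hbdd
    ⟨‖x‖⁻¹ • x, H.smul_mem _ hx, by rw [norm_smul, norm_inv, norm_norm, inv_mul_cancel₀ hpos.ne'],
      rfl⟩
  rw [map_smul, ← smul_sub, norm_smul, norm_inv, norm_norm, inv_mul_le_iff₀ hpos] at hunit
  linarith

section Harmonic

variable {W0 W1 W2 : Type*}
  [NormedAddCommGroup W0] [InnerProductSpace ℝ W0]
  [NormedAddCommGroup W1] [InnerProductSpace ℝ W1]
  [NormedAddCommGroup W2] [InnerProductSpace ℝ W2]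
  {V0 : Submodule ℝ W0} {V1 : Submodule ℝ W1} {d0 : V0 →ₗ[ℝ] W1} {d1 : V1 →ₗ[ℝ] W2}
  {V0h : Submodule ℝ V0} {V1h : Submodule ℝ V1}

variable (V0 d0 d1) in
def harmonicSpace : Submodule ℝ V1 where
  carrier := {q | IsHarmonic V0 d0 d1 q}
  add_mem' {q q'} hq hq' :=
    ⟨by rw [map_add, hq.1, hq'.1, add_zero], fun τ => by
      rw [Submodule.coe_add, inner_add_left, hq.2, hq'.2, add_zero]⟩
  zero_mem' := ⟨map_zero _, fun τ => by rw [Submodule.coe_zero, inner_zero_left]⟩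
  smul_mem' c q hq :=
    ⟨by rw [map_smul, hq.1, smul_zero], fun τ => by
      rw [Submodule.coe_smul, real_inner_smul_left, hq.2, mul_zero]⟩

theorem norm_sub_apply_le_sSup_mul_norm_of_isHarmonic {π1 : V1 →ₗ[ℝ] V1} {Cπ : ℝ}
    (hπ1bdd : ∀ v : V1, graphNorm1 d1 (π1 v) ≤ Cπ * graphNorm1 d1 v) {r : V1}
    (hr : IsHarmonic V0 d0 d1 r) :
    ‖(r : W1) - (π1 r : W1)‖ ≤ sSup {t : ℝ | ∃ r : V1, IsHarmonic V0 d0 d1 r ∧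
      ‖(r : W1)‖ = 1 ∧ t = ‖(r : W1) - ((π1 r : V1) : W1)‖} * ‖(r : W1)‖ :=
  norm_sub_apply_le_sSup_mul_norm (harmonicSpace V0 d0 d1) π1 (fun x hx =>
    (norm_le_graphNorm1 d1 _).trans ((hπ1bdd x).trans_eq
      (by rw [graphNorm1_of_apply_eq_zero d1 hx.1]; rfl))) hr

theorem apply_PB_eq_zero (hsub : ∀ τ : V0, d0 τ ∈ V1) (hdd : ∀ τ : V0, d1 ⟨d0 τ, hsub τ⟩ = 0)
    {PB : W1 → V1} (hPBrange : ∀ w : W1, ∃ τ : V0, d0 τ = ((PB w : V1) : W1)) (w : W1) :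
    d1 (PB w) = 0 := by
  obtain ⟨τ, hτ⟩ := hPBrange w
  rw [show PB w = ⟨d0 τ, hsub τ⟩ from Subtype.ext hτ.symm]
  exact hdd τ

theorem isHarmonic_sub_PB (hsub : ∀ τ : V0, d0 τ ∈ V1) (hdd : ∀ τ : V0, d1 ⟨d0 τ, hsub τ⟩ = 0)
    {PB : W1 → V1} (hPBrange : ∀ w : W1, ∃ τ : V0, d0 τ = ((PB w : V1) : W1))
    (hPBorth : ∀ (w : W1) (τ : V0), ⟪w - (PB w : W1), d0 τ⟫ = 0) {q : V1} (hq : d1 q = 0) :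
    IsHarmonic V0 d0 d1 (q - PB q) :=
  ⟨by rw [map_sub, hq, apply_PB_eq_zero hsub hdd hPBrange, sub_zero], hPBorth q⟩

theorem inner_PB_apply_eq_zero {PB : W1 → V1}
    (hPBorth : ∀ (w : W1) (τ : V0), ⟪w - (PB w : W1), d0 τ⟫ = 0) {q : V1}
    (hq : IsDiscreteHarmonic V0h V1h d0 d1 q) {τ : V0} (hτ : τ ∈ V0h) :
    ⟪((PB q : V1) : W1), d0 τ⟫ = 0 := by
  have h := hPBorth q τ
  rw [inner_sub_left, hq.2.2 τ hτ, zero_sub, neg_eq_zero] at h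
  exact h

theorem exists_π1_PB_eq (hsub : ∀ τ : V0, d0 τ ∈ V1) {π0 : V0 →ₗ[ℝ] V0} {π1 : V1 →ₗ[ℝ] V1}
    (hπ0mem : ∀ τ : V0, π0 τ ∈ V0h)
    (hπcomm : ∀ τ : V0, π1 ⟨d0 τ, hsub τ⟩ = ⟨d0 (π0 τ), hsub (π0 τ)⟩) {PB : W1 → V1}
    (hPBrange : ∀ w : W1, ∃ τ : V0, d0 τ = ((PB w : V1) : W1)) (w : W1) :
    ∃ τ ∈ V0h, ((π1 (PB w) : V1) : W1) = d0 τ := by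
  obtain ⟨τ, hτ⟩ := hPBrange w
  refine ⟨π0 τ, hπ0mem τ, ?_⟩
  rw [show PB w = ⟨d0 τ, hsub τ⟩ from Subtype.ext hτ.symm, hπcomm]

theorem norm_PB_le_of_isDiscreteHarmonic (hsub : ∀ τ : V0, d0 τ ∈ V1)
    (hdd : ∀ τ : V0, d1 ⟨d0 τ, hsub τ⟩ = 0) {π0 : V0 →ₗ[ℝ] V0} {π1 : V1 →ₗ[ℝ] V1}
    (hπ0mem : ∀ τ : V0, π0 τ ∈ V0h) (hπ1id : ∀ v : V1, v ∈ V1h → π1 v = v)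
    (hπcomm : ∀ τ : V0, π1 ⟨d0 τ, hsub τ⟩ = ⟨d0 (π0 τ), hsub (π0 τ)⟩) {PB : W1 → V1}
    (hPBrange : ∀ w : W1, ∃ τ : V0, d0 τ = ((PB w : V1) : W1))
    (hPBorth : ∀ (w : W1) (τ : V0), ⟪w - (PB w : W1), d0 τ⟫ = 0) {μ : ℝ} (hμ0 : 0 ≤ μ)
    (hμ : ∀ r : V1, IsHarmonic V0 d0 d1 r → ‖(r : W1) - (π1 r : W1)‖ ≤ μ * ‖(r : W1)‖)
    {q : V1} (hq : IsDiscreteHarmonic V0h V1h d0 d1 q) :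
    ‖((PB q : V1) : W1)‖ ≤ μ * ‖(q : W1)‖ := by
  set b := PB q
  set rh := q - b
  have hrh : IsHarmonic V0 d0 d1 rh := isHarmonic_sub_PB hsub hdd hPBrange hPBorth hq.2.1
  have hqb : (q : W1) = b + rh := by simp [rh]
  have hb_rh : ⟪(b : W1), (rh : W1)⟫ = 0 := by
    obtain ⟨τ, hτ⟩ := hPBrange q
    rw [← hτ, real_inner_comm]
    exact hrh.2 τ
  have hrh_le : ‖(rh : W1)‖ ≤ ‖(q : W1)‖ := by
    rw [← sq_le_sq₀ (norm_nonneg _) (norm_nonneg _), hqb, norm_add_sq_real, hb_rh]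
    linarith [sq_nonneg ‖(b : W1)‖]
  have hb_πb : ⟪(b : W1), (π1 b : W1)⟫ = 0 := by
    obtain ⟨τ, hτ, hπb⟩ := exists_π1_PB_eq hsub hπ0mem hπcomm hPBrange q
    rw [hπb]
    exact inner_PB_apply_eq_zero hPBorth hq hτ
  -- `π1` fixes `q = b + rh`, so its defect on `b` is minus its defect on the harmonic `rh`.
  have hdefect : (b : W1) - π1 b = π1 rh - rh := by
    have h := congrArg (fun v : V1 => (v : W1)) (hπ1id q hq.1)
    simp only [rh, map_sub, Submodule.coe_sub] at h ⊢
    rw [h]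
    abel
  have hsq : ‖(b : W1)‖ ^ 2 ≤ ‖(b : W1)‖ * (μ * ‖(q : W1)‖) :=
    calc ‖(b : W1)‖ ^ 2 = ⟪(b : W1), (π1 rh : W1) - rh⟫ := by
          rw [← hdefect, inner_sub_right, hb_πb, sub_zero, real_inner_self_eq_norm_sq]
      _ ≤ ‖(b : W1)‖ * ‖(rh : W1) - π1 rh‖ := by
          rw [norm_sub_rev]
          exact real_inner_le_norm _ _
      _ ≤ ‖(b : W1)‖ * (μ * ‖(q : W1)‖) := by
          gcongr
          exact (hμ rh hrh).trans (by gcongr)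
  exact le_of_sq_le_mul (by positivity) hsq

theorem inner_eq_inner_PB_of_isDiscreteHarmonic (hsub : ∀ τ : V0, d0 τ ∈ V1)
    (hdd : ∀ τ : V0, d1 ⟨d0 τ, hsub τ⟩ = 0) {π0 : V0 →ₗ[ℝ] V0} {π1 : V1 →ₗ[ℝ] V1}
    (hπ0mem : ∀ τ : V0, π0 τ ∈ V0h)
    (hπcomm : ∀ τ : V0, π1 ⟨d0 τ, hsub τ⟩ = ⟨d0 (π0 τ), hsub (π0 τ)⟩) {PB : W1 → V1}
    (hPBrange : ∀ w : W1, ∃ τ : V0, d0 τ = ((PB w : V1) : W1))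
    (hPBorth : ∀ (w : W1) (τ : V0), ⟪w - (PB w : W1), d0 τ⟫ = 0) {u : V1}
    (hu : ∀ q : V1, IsHarmonic V0 d0 d1 q → ⟪(u : W1), (q : W1)⟫ = 0)
    {q : V1} (hq : IsDiscreteHarmonic V0h V1h d0 d1 q) :
    ⟪(u : W1), (q : W1)⟫ = ⟪((PB u : V1) : W1) - π1 (PB u), ((PB q : V1) : W1)⟫ := by
  have h1 := hu _ (isHarmonic_sub_PB hsub hdd hPBrange hPBorth hq.2.1)
  have h2 : ⟪(u : W1) - PB u, ((PB q : V1) : W1)⟫ = 0 := by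
    obtain ⟨τ, hτ⟩ := hPBrange q
    rw [← hτ]
    exact hPBorth u τ
  have h3 : ⟪((π1 (PB u) : V1) : W1), ((PB q : V1) : W1)⟫ = 0 := by
    obtain ⟨τ, hτ, hπ⟩ := exists_π1_PB_eq hsub hπ0mem hπcomm hPBrange u
    rw [hπ, real_inner_comm]
    exact inner_PB_apply_eq_zero hPBorth hq hτ
  rw [Submodule.coe_sub, inner_sub_right] at h1
  rw [inner_sub_left] at h2 ⊢
  linarith

theorem norm_sub_apply_le_graphNorm1_sub {π1 : V1 →ₗ[ℝ] V1} {Cπ : ℝ}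
    (hπ1bdd : ∀ v : V1, graphNorm1 d1 (π1 v) ≤ Cπ * graphNorm1 d1 v)
    (hπ1id : ∀ v : V1, v ∈ V1h → π1 v = v) (x : V1) {y : V1} (hy : y ∈ V1h) :
    ‖(x : W1) - π1 x‖ ≤ (1 + Cπ) * graphNorm1 d1 (x - y) := by
  have hxy : (x : W1) - π1 x = ((x - y : V1) : W1) - π1 (x - y) := by
    rw [map_sub, hπ1id y hy]
    simp
  calc ‖(x : W1) - π1 x‖ ≤ ‖((x - y : V1) : W1)‖ + ‖((π1 (x - y) : V1) : W1)‖ :=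
        hxy ▸ norm_sub_le _ _
    _ ≤ graphNorm1 d1 (x - y) + graphNorm1 d1 (π1 (x - y)) :=
        add_le_add (norm_le_graphNorm1 _ _) (norm_le_graphNorm1 _ _)
    _ ≤ (1 + Cπ) * graphNorm1 d1 (x - y) := by linarith [hπ1bdd (x - y)]

theorem abs_inner_le_of_isDiscreteHarmonic (hsub : ∀ τ : V0, d0 τ ∈ V1)
    (hdd : ∀ τ : V0, d1 ⟨d0 τ, hsub τ⟩ = 0) {π0 : V0 →ₗ[ℝ] V0} {π1 : V1 →ₗ[ℝ] V1} {Cπ : ℝ}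
    (hπ0mem : ∀ τ : V0, π0 τ ∈ V0h) (hπ1id : ∀ v : V1, v ∈ V1h → π1 v = v)
    (hπ1bdd : ∀ v : V1, graphNorm1 d1 (π1 v) ≤ Cπ * graphNorm1 d1 v)
    (hπcomm : ∀ τ : V0, π1 ⟨d0 τ, hsub τ⟩ = ⟨d0 (π0 τ), hsub (π0 τ)⟩) {PB : W1 → V1}
    (hPBrange : ∀ w : W1, ∃ τ : V0, d0 τ = ((PB w : V1) : W1))
    (hPBorth : ∀ (w : W1) (τ : V0), ⟪w - (PB w : W1), d0 τ⟫ = 0) {μ : ℝ} (hμ0 : 0 ≤ μ)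
    (hμ : ∀ r : V1, IsHarmonic V0 d0 d1 r → ‖(r : W1) - (π1 r : W1)‖ ≤ μ * ‖(r : W1)‖)
    {u : V1} (hu : ∀ q : V1, IsHarmonic V0 d0 d1 q → ⟪(u : W1), (q : W1)⟫ = 0)
    {y : V1} (hy : y ∈ V1h) {q : V1} (hq : IsDiscreteHarmonic V0h V1h d0 d1 q) :
    |⟪(u : W1), (q : W1)⟫| ≤ (1 + Cπ) * μ * graphNorm1 d1 (PB u - y) * ‖(q : W1)‖ := by
  rw [inner_eq_inner_PB_of_isDiscreteHarmonic hsub hdd hπ0mem hπcomm hPBrange hPBorth hu hq]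
  have hdefect := norm_sub_apply_le_graphNorm1_sub hπ1bdd hπ1id (PB u) hy
  calc _ ≤ ‖((PB u : V1) : W1) - π1 (PB u)‖ * ‖((PB q : V1) : W1)‖ := abs_real_inner_le_norm _ _
    _ ≤ (1 + Cπ) * graphNorm1 d1 (PB u - y) * (μ * ‖(q : W1)‖) :=
        mul_le_mul hdefect (norm_PB_le_of_isDiscreteHarmonic hsub hdd hπ0mem hπ1id hπcomm
          hPBrange hPBorth hμ0 hμ hq) (norm_nonneg _) ((norm_nonneg _).trans hdefect)
    _ = _ := by ring

end Harmonic

section DiscreteError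

variable {W0 W1 W2 : Type*}
  [NormedAddCommGroup W0] [InnerProductSpace ℝ W0]
  [NormedAddCommGroup W1] [InnerProductSpace ℝ W1]
  [NormedAddCommGroup W2] [InnerProductSpace ℝ W2]
  {V0 : Submodule ℝ W0} {V1 : Submodule ℝ W1} {d0 : V0 →ₗ[ℝ] W1} {d1 : V1 →ₗ[ℝ] W2}
  {V0h : Submodule ℝ V0} {V1h : Submodule ℝ V1}

theorem exists_isDiscreteHarmonic_norm_sub_le {c : ℝ} (hc : 0 ≤ c)
    (hdec : HasStableDiscreteHodgeDecomposition V0h V1h d0 d1 c) {p : V1}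
    (hp : IsHarmonic V0 d0 d1 p) {q : V1} (hq : q ∈ V1h) :
    ∃ q' : V1, IsDiscreteHarmonic V0h V1h d0 d1 q' ∧
      ‖((p - q' : V1) : W1)‖ ≤ (2 + c) * graphNorm1 d1 (p - q) := by
  obtain ⟨ρ, -, qH, hqH, -, hperp, hB, -⟩ := hdec q hq
  refine ⟨qH, hqH, ?_⟩
  have hpq : ‖((p - q : V1) : W1)‖ ≤ graphNorm1 d1 (p - q) := norm_le_graphNorm1 _ _
  have hd1 : ‖d1 q‖ ≤ graphNorm1 d1 (p - q) := by
    rw [← norm_neg, ← zero_sub, ← hp.1, ← map_sub]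
    exact norm_apply_le_graphNorm1 _ _
  have hρ : ‖d0 ρ‖ ≤ ‖((p - q : V1) : W1)‖ := by
    refine le_of_sq_le_mul (norm_nonneg _) ?_
    calc ‖d0 ρ‖ ^ 2 = ⟪((q - p : V1) : W1), d0 ρ⟫ := by
          rw [← hB, Submodule.coe_sub, inner_sub_left, hp.2, sub_zero]
      _ ≤ ‖d0 ρ‖ * ‖((p - q : V1) : W1)‖ := by
          rw [← neg_sub, Submodule.coe_neg, inner_neg_left, mul_comm]
          exact (neg_le_abs _).trans (abs_real_inner_le_norm _ _)
  have hsplit : ((p - qH : V1) : W1) = ((p - q : V1) : W1) + d0 ρ + ((q : W1) - d0 ρ - qH) := by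
    simp only [Submodule.coe_sub]
    abel
  rw [hsplit]
  calc _ ≤ ‖((p - q : V1) : W1)‖ + ‖d0 ρ‖ + ‖(q : W1) - d0 ρ - qH‖ := norm_add₃_le
    _ ≤ graphNorm1 d1 (p - q) + graphNorm1 d1 (p - q) + c * graphNorm1 d1 (p - q) := by
        gcongr
        · exact hρ.trans hpq
        · exact hperp.trans (by gcongr)
    _ = (2 + c) * graphNorm1 d1 (p - q) := by ring

theorem norm_le_of_galerkin_eq {c : ℝ} (hc : 0 ≤ c)
    (hdec : HasStableDiscreteHodgeDecomposition V0h V1h d0 d1 c) {s aσ : V0} {w au : V1} {M : ℝ}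
    (hM : 0 ≤ M) (hw : w ∈ V1h)
    (hE1 : ∀ t ∈ V0h, ⟪(s : W0), t⟫ - ⟪(w : W1), d0 t⟫ = ⟪(aσ : W0), t⟫ - ⟪(au : W1), d0 t⟫)
    (hE3 : ∀ q, IsDiscreteHarmonic V0h V1h d0 d1 q →
      |⟪(w : W1) - au, (q : W1)⟫| ≤ M * ‖(q : W1)‖) :
    ‖(w : W1)‖ ≤ c * (‖(s : W0)‖ + ‖(aσ : W0)‖ + ‖d1 w‖) + 2 * ‖(au : W1)‖ + M := by
  obtain ⟨ρ, hρ, wH, hwH, hρc, hperp, hB, hH⟩ := hdec w hw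
  have hBbound : ‖d0 ρ‖ ≤ c * (‖(s : W0)‖ + ‖(aσ : W0)‖) + ‖(au : W1)‖ := by
    refine le_of_sq_le_mul (by positivity) ?_
    have h := hE1 ρ hρ
    calc ‖d0 ρ‖ ^ 2 = ⟪(s : W0) - aσ, ρ⟫ + ⟪(au : W1), d0 ρ⟫ := by
          rw [← hB, inner_sub_left]
          linarith
      _ ≤ (‖(s : W0)‖ + ‖(aσ : W0)‖) * ‖(ρ : W0)‖ + ‖(au : W1)‖ * ‖d0 ρ‖ := by
          gcongr
          · exact (real_inner_le_norm _ _).trans (by gcongr; exact norm_sub_le _ _)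
          · exact real_inner_le_norm _ _
      _ ≤ ‖d0 ρ‖ * (c * (‖(s : W0)‖ + ‖(aσ : W0)‖) + ‖(au : W1)‖) := by
          nlinarith [mul_le_mul_of_nonneg_left hρc
            (add_nonneg (norm_nonneg (s : W0)) (norm_nonneg (aσ : W0)))]
  have hHbound : ‖(wH : W1)‖ ≤ M + ‖(au : W1)‖ := by
    refine le_of_sq_le_mul (by positivity) ?_
    calc ‖(wH : W1)‖ ^ 2 = ⟪(w : W1) - au, (wH : W1)⟫ + ⟪(au : W1), (wH : W1)⟫ := by
          rw [← hH, inner_sub_left, sub_add_cancel]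
      _ ≤ M * ‖(wH : W1)‖ + ‖(au : W1)‖ * ‖(wH : W1)‖ :=
          add_le_add ((le_abs_self _).trans (hE3 wH hwH)) (real_inner_le_norm _ _)
      _ = ‖(wH : W1)‖ * (M + ‖(au : W1)‖) := by ring
  have hsplit : (w : W1) = d0 ρ + wH + ((w : W1) - d0 ρ - wH) := by abel
  rw [hsplit]
  refine norm_add₃_le.trans ?_
  linarith

theorem norm_d0_le_of_galerkin_eq (hsub : ∀ τ : V0, d0 τ ∈ V1)
    (hdd : ∀ τ : V0, d1 ⟨d0 τ, hsub τ⟩ = 0)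
    (hd0h : ∀ τ : V0, τ ∈ V0h → (⟨d0 τ, hsub τ⟩ : V1) ∈ V1h) {s aσ : V0} {w au r ap : V1}
    {g : W1} (hs : s ∈ V0h)
    (hE2 : ∀ v ∈ V1h, ⟪d0 s, (v : W1)⟫ + ⟪d1 w, d1 v⟫ + ⟪(r : W1), v⟫ =
      ⟪d0 aσ, (v : W1)⟫ + ⟪d1 au, d1 v⟫ + ⟪(ap : W1), v⟫ + ⟪g, v⟫)
    (hr : ⟪(r : W1), d0 s⟫ = 0) (hap : ⟪(ap : W1), d0 s⟫ = 0) :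
    ‖d0 s‖ ≤ ‖d0 aσ‖ + ‖g‖ := by
  refine le_of_sq_le_mul (by positivity) ?_
  have h := hE2 _ (hd0h s hs)
  simp only [hdd, inner_zero_right, add_zero] at h
  calc ‖d0 s‖ ^ 2 = ⟪d0 aσ, d0 s⟫ + ⟪g, d0 s⟫ := by
        rw [← real_inner_self_eq_norm_sq]
        simpa [hr, hap] using h
    _ ≤ ‖d0 aσ‖ * ‖d0 s‖ + ‖g‖ * ‖d0 s‖ :=
        add_le_add (real_inner_le_norm _ _) (real_inner_le_norm _ _)
    _ = ‖d0 s‖ * (‖d0 aσ‖ + ‖g‖) := by ring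

theorem energy_le_of_galerkin_eq {s aσ : V0} {w au r ap : V1} {g : W1} {M : ℝ}
    (hs : s ∈ V0h) (hw : w ∈ V1h) (hr : IsDiscreteHarmonic V0h V1h d0 d1 r)
    (hE1 : ∀ t ∈ V0h, ⟪(s : W0), t⟫ - ⟪(w : W1), d0 t⟫ = ⟪(aσ : W0), t⟫ - ⟪(au : W1), d0 t⟫)
    (hE2 : ∀ v ∈ V1h, ⟪d0 s, (v : W1)⟫ + ⟪d1 w, d1 v⟫ + ⟪(r : W1), v⟫ =
      ⟪d0 aσ, (v : W1)⟫ + ⟪d1 au, d1 v⟫ + ⟪(ap : W1), v⟫ + ⟪g, v⟫)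
    (hE3 : |⟪(w : W1) - au, (r : W1)⟫| ≤ M * ‖(r : W1)‖)
    (hmono : ⟪g, (w : W1) + r⟫ ≤ ⟪g, (au : W1) + ap⟫) :
    ‖(s : W0)‖ ^ 2 + ‖d1 w‖ ^ 2 + ‖(r : W1)‖ ^ 2 ≤
      ‖(aσ : W0)‖ * ‖(s : W0)‖ + ‖(au : W1)‖ * ‖d0 s‖ + (‖d0 aσ‖ + ‖(ap : W1)‖) * ‖(w : W1)‖ +
        ‖d1 au‖ * ‖d1 w‖ + (‖d0 aσ‖ + ‖(ap : W1)‖ + ‖(au : W1)‖ + M) * ‖(r : W1)‖ +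
        (‖(au : W1)‖ + ‖(ap : W1)‖) * ‖g‖ := by
  have h1 := hE1 s hs
  have h2 := hE2 w hw
  have h3 := hE2 r hr.1
  have hsr : ⟪d0 s, (r : W1)⟫ = 0 := by
    rw [real_inner_comm]
    exact hr.2.2 s hs
  simp only [hr.2.1, hsr, inner_zero_right, zero_add, add_zero] at h3
  have hrw : ⟪(r : W1), (w : W1)⟫ = ⟪(w : W1) - au, (r : W1)⟫ + ⟪(au : W1), (r : W1)⟫ := by
    rw [inner_sub_left, sub_add_cancel, real_inner_comm]
  rw [real_inner_comm (d0 s) (w : W1)] at h1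
  rw [hrw] at h2
  rw [inner_add_right, inner_add_right, real_inner_comm (au : W1) g,
    real_inner_comm (ap : W1) g] at hmono
  rw [← real_inner_self_eq_norm_sq (s : W0), ← real_inner_self_eq_norm_sq (d1 w),
    ← real_inner_self_eq_norm_sq (r : W1)]
  linarith [real_inner_le_norm (aσ : W0) s,
    neg_le_of_abs_le (abs_real_inner_le_norm (au : W1) (d0 s)), real_inner_le_norm (d0 aσ) w, real_inner_le_norm (ap : W1) w, real_inner_le_norm (d1 au) (d1 w),
    neg_le_of_abs_le (abs_real_inner_le_norm (au : W1) r), real_inner_le_norm (d0 aσ) r,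
    real_inner_le_norm (ap : W1) r, real_inner_le_norm (au : W1) g, real_inner_le_norm (ap : W1) g,
    neg_le_of_abs_le hE3]

theorem energy_le_mul_of_galerkin_eq {s aσ : V0} {w au r ap : V1} {g : W1} {M : ℝ}
    (hM : 0 ≤ M) (hs : s ∈ V0h) (hw : w ∈ V1h) (hr : IsDiscreteHarmonic V0h V1h d0 d1 r)
    (hE1 : ∀ t ∈ V0h, ⟪(s : W0), t⟫ - ⟪(w : W1), d0 t⟫ = ⟪(aσ : W0), t⟫ - ⟪(au : W1), d0 t⟫)
    (hE2 : ∀ v ∈ V1h, ⟪d0 s, (v : W1)⟫ + ⟪d1 w, d1 v⟫ + ⟪(r : W1), v⟫ =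
      ⟪d0 aσ, (v : W1)⟫ + ⟪d1 au, d1 v⟫ + ⟪(ap : W1), v⟫ + ⟪g, v⟫)
    (hE3 : |⟪(w : W1) - au, (r : W1)⟫| ≤ M * ‖(r : W1)‖)
    (hmono : ⟪g, (w : W1) + r⟫ ≤ ⟪g, (au : W1) + ap⟫) :
    ‖(s : W0)‖ ^ 2 + ‖d1 w‖ ^ 2 + ‖(r : W1)‖ ^ 2 ≤
      (graphNorm0 d0 aσ + graphNorm1 d1 au + ‖(ap : W1)‖ + M) *
        (‖(s : W0)‖ + ‖d1 w‖ + ‖(r : W1)‖ + ‖d0 s‖ + ‖(w : W1)‖ + ‖g‖) := by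
  refine (energy_le_of_galerkin_eq hs hw hr hE1 hE2 hE3 hmono).trans ?_
  rw [graphNorm0_eq_graphNorm1]
  set S := graphNorm1 d0 aσ + graphNorm1 d1 au + ‖(ap : W1)‖ + M
  have hA0 := norm_le_graphNorm1 d0 aσ
  have hA1 := norm_apply_le_graphNorm1 d0 aσ
  have hU0 := norm_le_graphNorm1 d1 au
  have hU1 := norm_apply_le_graphNorm1 d1 au
  have hA := graphNorm1_nonneg d0 aσ
  have hU := graphNorm1_nonneg d1 au
  have hP := norm_nonneg (ap : W1)
  have hle {a : ℝ} (ha : a ≤ S) (x : ℝ) (hx : 0 ≤ x) : a * x ≤ S * x :=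
    mul_le_mul_of_nonneg_right ha hx
  linarith [hle (a := ‖(aσ : W0)‖) (by linarith) _ (norm_nonneg (s : W0)),
    hle (a := ‖(au : W1)‖) (by linarith) _ (norm_nonneg (d0 s)),
    hle (a := ‖d0 aσ‖ + ‖(ap : W1)‖) (by linarith) _ (norm_nonneg (w : W1)),
    hle (a := ‖d1 au‖) (by linarith) _ (norm_nonneg (d1 w)),
    hle (a := ‖d0 aσ‖ + ‖(ap : W1)‖ + ‖(au : W1)‖ + M) (by linarith) _ (norm_nonneg (r : W1)),
    hle (a := ‖(au : W1)‖ + ‖(ap : W1)‖) (by linarith) _ (norm_nonneg g)]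

theorem IsDiscreteHarmonic.sub {q q' : V1} (hq : IsDiscreteHarmonic V0h V1h d0 d1 q)
    (hq' : IsDiscreteHarmonic V0h V1h d0 d1 q') : IsDiscreteHarmonic V0h V1h d0 d1 (q - q') :=
  ⟨sub_mem hq.1 hq'.1, by rw [map_sub, hq.2.1, hq'.2.1, sub_zero], fun τ hτ => by
    rw [Submodule.coe_sub, inner_sub_left, hq.2.2 τ hτ, hq'.2.2 τ hτ, sub_zero]⟩

theorem galerkin_eq_of_solutions {F : V1 → W1} {f : W1} {σ σh : V0} {u p uh ph : V1}
    (hsol : IsMixedSemilinearSolution V0 d0 d1 F f σ u p)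
    (hdsol : IsDiscreteMixedSemilinearSolution V0h V1h d0 d1 F f σh uh ph)
    (τ0 : V0) (v0 q0 : V1) :
    (∀ t ∈ V0h, ⟪((σh - τ0 : V0) : W0), t⟫ - ⟪((uh - v0 : V1) : W1), d0 t⟫ =
        ⟪((σ - τ0 : V0) : W0), t⟫ - ⟪((u - v0 : V1) : W1), d0 t⟫) ∧
    (∀ v ∈ V1h, ⟪d0 (σh - τ0), (v : W1)⟫ + ⟪d1 (uh - v0), d1 v⟫ + ⟪((ph - q0 : V1) : W1), v⟫ =
        ⟪d0 (σ - τ0), (v : W1)⟫ + ⟪d1 (u - v0), d1 v⟫ + ⟪((p - q0 : V1) : W1), v⟫ +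
          ⟪F (u + p) - F (uh + ph), v⟫) := by
  refine ⟨fun t ht => ?_, fun v hv => ?_⟩
  · have h := hsol.2.1 t
    have hh := hdsol.2.2.2.1 t ht
    simp only [Submodule.coe_sub, inner_sub_left]
    linarith
  · have h := hsol.2.2.1 v
    have hh := hdsol.2.2.2.2.1 v hv
    simp only [map_sub, Submodule.coe_sub, inner_sub_left]
    linarith

theorem inner_sub_le_of_monotone {F : V1 → W1}
    (hFmono : ∀ v v' : V1, 0 ≤ ⟪F v - F v', (v : W1) - (v' : W1)⟫) (u p uh ph v0 q0 : V1) :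
    ⟪F (u + p) - F (uh + ph), ((uh - v0 : V1) : W1) + (ph - q0 : V1)⟫ ≤
      ⟪F (u + p) - F (uh + ph), ((u - v0 : V1) : W1) + (p - q0 : V1)⟫ := by
  have h := hFmono (u + p) (uh + ph)
  rwa [show ((u + p : V1) : W1) - ((uh + ph : V1) : W1) =
      (((u - v0 : V1) : W1) + (p - q0 : V1)) - (((uh - v0 : V1) : W1) + (ph - q0 : V1)) by
    simp only [Submodule.coe_add, Submodule.coe_sub]; abel, inner_sub_right, sub_nonneg] at h

theorem exists_galerkinError_le (hsub : ∀ τ : V0, d0 τ ∈ V1)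
    (hdd : ∀ τ : V0, d1 ⟨d0 τ, hsub τ⟩ = 0)
    (hd0h : ∀ τ : V0, τ ∈ V0h → (⟨d0 τ, hsub τ⟩ : V1) ∈ V1h) {c : ℝ} (hc : 0 ≤ c)
    (hdec : HasStableDiscreteHodgeDecomposition V0h V1h d0 d1 c) {L : ℝ} (hL : 0 ≤ L) :
    ∃ C, 0 ≤ C ∧ ∀ {s aσ : V0} {w au r ap : V1} {g : W1} {M : ℝ}, 0 ≤ M → s ∈ V0h → w ∈ V1h →
      IsDiscreteHarmonic V0h V1h d0 d1 r → ⟪(ap : W1), d0 s⟫ = 0 →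
      (∀ t ∈ V0h, ⟪(s : W0), t⟫ - ⟪(w : W1), d0 t⟫ = ⟪(aσ : W0), t⟫ - ⟪(au : W1), d0 t⟫) →
      (∀ v ∈ V1h, ⟪d0 s, (v : W1)⟫ + ⟪d1 w, d1 v⟫ + ⟪(r : W1), v⟫ =
        ⟪d0 aσ, (v : W1)⟫ + ⟪d1 au, d1 v⟫ + ⟪(ap : W1), v⟫ + ⟪g, v⟫) →
      (∀ q, IsDiscreteHarmonic V0h V1h d0 d1 q →
        |⟪(w : W1) - au, (q : W1)⟫| ≤ M * ‖(q : W1)‖) →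
      ⟪g, (w : W1) + r⟫ ≤ ⟪g, (au : W1) + ap⟫ →
      ‖g‖ ≤ L * (graphNorm1 d1 au + ‖(w : W1)‖ + ‖d1 w‖ + ‖(ap : W1)‖ + ‖(r : W1)‖) →
      ‖(s : W0)‖ + ‖d0 s‖ + ‖(w : W1)‖ + ‖d1 w‖ + ‖(r : W1)‖ ≤
        C * (graphNorm0 d0 aσ + graphNorm1 d1 au + ‖(ap : W1)‖ + M) := by
  set a := c + 2
  set b := L * (a + 2)
  set K := a + 2 * b + 2
  refine ⟨(a + b + 2) * (3 * K + 2), by positivity, ?_⟩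
  intro s aσ w au r ap g M hM hs hw hr hap hE1 hE2 hE3 hmono hg
  set S := graphNorm0 d0 aσ + graphNorm1 d1 au + ‖(ap : W1)‖ + M
  set T := ‖(s : W0)‖ + ‖d1 w‖ + ‖(r : W1)‖ with hTdef
  have hA0 : ‖(aσ : W0)‖ ≤ graphNorm0 d0 aσ := norm_le_graphNorm1 d0 aσ
  have hA1 : ‖d0 aσ‖ ≤ graphNorm0 d0 aσ := norm_apply_le_graphNorm1 d0 aσ
  have hU0 : ‖(au : W1)‖ ≤ graphNorm1 d1 au := norm_le_graphNorm1 d1 au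
  have hA : 0 ≤ graphNorm0 d0 aσ := graphNorm1_nonneg d0 aσ
  have hU : 0 ≤ graphNorm1 d1 au := graphNorm1_nonneg d1 au
  have hS : 0 ≤ S := by positivity
  have hT : 0 ≤ T := by positivity
  have hwT : ‖(w : W1)‖ ≤ a * (T + S) := by
    have := norm_le_of_galerkin_eq hc hdec hM hw hE1 hE3
    nlinarith [norm_nonneg (s : W0), norm_nonneg (d1 w), norm_nonneg (r : W1),
      norm_nonneg (ap : W1)]
  have hgT : ‖g‖ ≤ b * (T + S) := by
    refine hg.trans ?_
    nlinarith [norm_nonneg (s : W0), norm_nonneg (d1 w), norm_nonneg (r : W1),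
      norm_nonneg (ap : W1)]
  have hdT : ‖d0 s‖ ≤ (b + 1) * (T + S) := by
    have := norm_d0_le_of_galerkin_eq hsub hdd hd0h hs hE2 (hr.2.2 s hs) hap
    nlinarith [norm_nonneg (ap : W1)]
  have hTS : T ≤ (3 * K + 1) * S := by
    refine le_mul_of_sq_le_mul_mul_add hS (by positivity) ?_
    have hen := energy_le_mul_of_galerkin_eq hM hs hw hr hE1 hE2 (hE3 r hr) hmono
    nlinarith [sq_nonneg (‖(s : W0)‖ - ‖d1 w‖), sq_nonneg (‖(s : W0)‖ - ‖(r : W1)‖),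
      sq_nonneg (‖d1 w‖ - ‖(r : W1)‖)]
  calc _ = T + ‖d0 s‖ + ‖(w : W1)‖ := by rw [hTdef]; ring
    _ ≤ (a + b + 2) * (T + S) := by nlinarith
    _ ≤ (a + b + 2) * ((3 * K + 2) * S) := by gcongr; linarith
    _ = _ := by ring

theorem error_le_approximationError_add_discreteError (σ σh τ0 : V0) (u uh v0 p ph q0 : V1) :
    graphNorm0 d0 (σ - σh) + graphNorm1 d1 (u - uh) + ‖((p - ph : V1) : W1)‖ ≤
      (graphNorm0 d0 (σ - τ0) + graphNorm1 d1 (u - v0) + ‖((p - q0 : V1) : W1)‖) +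
        (‖((σh - τ0 : V0) : W0)‖ + ‖d0 (σh - τ0)‖ + ‖((uh - v0 : V1) : W1)‖ + ‖d1 (uh - v0)‖ +
          ‖((ph - q0 : V1) : W1)‖) := by
  have hp : ‖((p - q0 - (ph - q0) : V1) : W1)‖ ≤ ‖((p - q0 : V1) : W1)‖ + ‖((ph - q0 : V1) : W1)‖ :=
    norm_sub_le _ _
  rw [graphNorm0_eq_graphNorm1, ← sub_sub_sub_cancel_right σ σh τ0,
    ← sub_sub_sub_cancel_right u uh v0, ← sub_sub_sub_cancel_right p ph q0]
  linarith [graphNorm1_sub_le d0 (σ - τ0) (σh - τ0), graphNorm1_le_norm_add_norm d0 (σh - τ0),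
    graphNorm1_sub_le d1 (u - v0) (uh - v0), graphNorm1_le_norm_add_norm d1 (uh - v0)]

theorem exists_error_le_approximationError (hsub : ∀ τ : V0, d0 τ ∈ V1)
    (hdd : ∀ τ : V0, d1 ⟨d0 τ, hsub τ⟩ = 0)
    (hd0h : ∀ τ : V0, τ ∈ V0h → (⟨d0 τ, hsub τ⟩ : V1) ∈ V1h) {c : ℝ} (hc : 0 ≤ c)
    (hdec : HasStableDiscreteHodgeDecomposition V0h V1h d0 d1 c) {F : V1 → W1} {L : ℝ}
    (hL : 0 ≤ L) (hFmono : ∀ v v' : V1, 0 ≤ ⟪F v - F v', (v : W1) - (v' : W1)⟫)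
    (hFlip : ∀ v v' : V1, ‖F v - F v'‖ ≤ L * graphNorm1 d1 (v - v')) :
    ∃ C, 0 < C ∧ ∀ {f : W1} {σ σh : V0} {u p uh ph : V1},
      IsMixedSemilinearSolution V0 d0 d1 F f σ u p →
      IsDiscreteMixedSemilinearSolution V0h V1h d0 d1 F f σh uh ph →
      ∀ {τ0 : V0} {v0 q : V1} {M : ℝ}, τ0 ∈ V0h → v0 ∈ V1h → q ∈ V1h → 0 ≤ M →
      (∀ q, IsDiscreteHarmonic V0h V1h d0 d1 q → |⟪(u : W1), (q : W1)⟫| ≤ M * ‖(q : W1)‖) →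
      graphNorm0 d0 (σ - σh) + graphNorm1 d1 (u - uh) + ‖((p - ph : V1) : W1)‖ ≤
        C * (graphNorm0 d0 (σ - τ0) + graphNorm1 d1 (u - v0) + graphNorm1 d1 (p - q) + M) := by
  obtain ⟨C, hC, hgalerkin⟩ := exists_galerkinError_le hsub hdd hd0h hc hdec hL
  refine ⟨(C + 1) * (2 + c), by positivity, ?_⟩
  intro f σ σh u p uh ph hsol hdsol τ0 v0 q M hτ0 hv0 hq hM hu
  obtain ⟨q0, hq0, hpq0⟩ := exists_isDiscreteHarmonic_norm_sub_le hc hdec hsol.1 hq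
  obtain ⟨hE1, hE2⟩ := galerkin_eq_of_solutions hsol hdsol τ0 v0 q0
  obtain ⟨hσh, huh, hph, -, -, huh_perp⟩ := hdsol
  have hs : σh - τ0 ∈ V0h := sub_mem hσh hτ0
  have hap : ⟪((p - q0 : V1) : W1), d0 (σh - τ0)⟫ = 0 := by
    rw [Submodule.coe_sub, inner_sub_left, hsol.1.2, hq0.2.2 _ hs, sub_zero]
  have hE3 (q : V1) (hq : IsDiscreteHarmonic V0h V1h d0 d1 q) :
      |⟪((uh - v0 : V1) : W1) - (u - v0 : V1), (q : W1)⟫| ≤ M * ‖(q : W1)‖ := by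
    rw [Submodule.coe_sub, Submodule.coe_sub, sub_sub_sub_cancel_right, inner_sub_left,
      huh_perp q hq, zero_sub, abs_neg]
    exact hu q hq
  have hLip := (hFlip (u + p) (uh + ph)).trans (mul_le_mul_of_nonneg_left
    (graphNorm1_add_sub_add_le d1 (u := u) (uh := uh) hsol.1.1 hph.2.1 v0 q0) hL)
  have hdiscrete :=
    hgalerkin hM hs (sub_mem huh hv0) (hph.sub hq0) hap hE1 hE2 hE3
      (inner_sub_le_of_monotone hFmono u p uh ph v0 q0) hLip
  have htriangle := error_le_approximationError_add_discreteError (d0 := d0) (d1 := d1) σ σh τ0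
    u uh v0 p ph q0
  have hA := graphNorm1_nonneg d0 (σ - τ0)
  have hU := graphNorm1_nonneg d1 (u - v0)
  rw [graphNorm0_eq_graphNorm1] at htriangle hdiscrete ⊢
  calc _ ≤ (C + 1) * (graphNorm1 d0 (σ - τ0) + graphNorm1 d1 (u - v0) +
        ‖((p - q0 : V1) : W1)‖ + M) := by linarith
    _ ≤ (C + 1) * ((2 + c) * (graphNorm1 d0 (σ - τ0) + graphNorm1 d1 (u - v0) +
        graphNorm1 d1 (p - q) + M)) := by
      gcongr
      nlinarith [mul_nonneg hc hA, mul_nonneg hc hU, mul_nonneg hc hM]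
    _ = _ := by ring

end DiscreteError

section

variable {W0 W1 W2 : Type*}
  [NormedAddCommGroup W0] [InnerProductSpace ℝ W0] [CompleteSpace W0]
  [NormedAddCommGroup W1] [InnerProductSpace ℝ W1] [CompleteSpace W1]
  [NormedAddCommGroup W2] [InnerProductSpace ℝ W2] [CompleteSpace W2]

theorem semilinear_subcomplex_error_estimate_general
    (V0 : Submodule ℝ W0) (V1 : Submodule ℝ W1)
    (d0 : V0 →ₗ[ℝ] W1) (d1 : V1 →ₗ[ℝ] W2)
    (hsub : ∀ τ : V0, d0 τ ∈ V1)
    (hdd : ∀ τ : V0, d1 ⟨d0 τ, hsub τ⟩ = 0)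
    -- the nonlinearity
    (F : V1 → W1) (CF : ℝ)
    (hFmono : ∀ v v' : V1, 0 ≤ ⟪F v - F v', (v : W1) - (v' : W1)⟫)
    (hFlip : ∀ v v' : V1, ‖F v - F v'‖ ≤ CF * graphNorm1 d1 (v - v'))
    -- the finite-dimensional subcomplex
    (V0h : Submodule ℝ V0) (V1h : Submodule ℝ V1)
    (hfin0 : FiniteDimensional ℝ V0h) (hfin1 : FiniteDimensional ℝ V1h)
    (hd0h : ∀ τ : V0, τ ∈ V0h → (⟨d0 τ, hsub τ⟩ : V1) ∈ V1h)
    -- the bounded cochain projections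
    (π0 : V0 →ₗ[ℝ] V0) (π1 : V1 →ₗ[ℝ] V1) (Cπ : ℝ)
    (hπ0mem : ∀ τ : V0, π0 τ ∈ V0h)
    (hπ1id : ∀ v : V1, v ∈ V1h → π1 v = v)
    (hπ1bdd : ∀ v : V1, graphNorm1 d1 (π1 v) ≤ Cπ * graphNorm1 d1 v)
    (hπcomm : ∀ τ : V0, π1 ⟨d0 τ, hsub τ⟩ = ⟨d0 (π0 τ), hsub (π0 τ)⟩)
    -- the `W1`-orthogonal projection onto `B = d0(V0)`
    (PB : W1 → V1)
    (hPBrange : ∀ w : W1, ∃ τ : V0, d0 τ = ((PB w : V1) : W1))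
    (hPBorth : ∀ (w : W1) (τ : V0), ⟪w - (PB w : W1), d0 τ⟫ = 0) :
    ∃ C : ℝ, 0 < C ∧ ∀ (f : W1) (σ σh : V0) (u p uh ph : V1),
      IsMixedSemilinearSolution V0 d0 d1 F f σ u p →
      IsDiscreteMixedSemilinearSolution V0h V1h d0 d1 F f σh uh ph →
      graphNorm0 d0 (σ - σh) + graphNorm1 d1 (u - uh) + ‖((p - ph : V1) : W1)‖ ≤
        C * ((⨅ τ : V0h, graphNorm0 d0 (σ - τ)) +
             (⨅ v : V1h, graphNorm1 d1 (u - v)) +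
             (⨅ q : V1h, graphNorm1 d1 (p - q)) +
             sSup {t : ℝ | ∃ r : V1, IsHarmonic V0 d0 d1 r ∧ ‖(r : W1)‖ = 1 ∧
                 t = ‖(r : W1) - ((π1 r : V1) : W1)‖} *
               (⨅ v : V1h, graphNorm1 d1 (PB (u : W1) - v))) := by
  have := hfin0
  have := hfin1
  obtain ⟨c, hc, hdec⟩ := exists_hasStableDiscreteHodgeDecomposition hsub hdd hd0h
  obtain ⟨C, hC, hcore⟩ := exists_error_le_approximationError hsub hdd hd0h hc hdec
    (le_max_right CF 0) hFmono fun v v' => (hFlip v v').trans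
      (by gcongr; exacts [graphNorm1_nonneg d1 _, le_max_left _ _])
  have hπ1bdd' (v : V1) : graphNorm1 d1 (π1 v) ≤ max Cπ 0 * graphNorm1 d1 v :=
    (hπ1bdd v).trans (by gcongr; exacts [graphNorm1_nonneg d1 v, le_max_left _ _])
  have hCπ : 0 ≤ max Cπ 0 := le_max_right _ _
  have hμ0 := Real.sSup_nonneg (s := {t : ℝ | ∃ r : V1, IsHarmonic V0 d0 d1 r ∧
    ‖(r : W1)‖ = 1 ∧ t = ‖(r : W1) - ((π1 r : V1) : W1)‖}) (by rintro t ⟨r, -, -, rfl⟩; positivity)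
  refine ⟨C * (1 + max Cπ 0), by positivity, fun f σ σh u p uh ph hsol hdsol => ?_⟩
  refine le_mul_iInf_add_iInf_add_iInf_add_mul_iInf (by positivity) hμ0 fun τ v q y => ?_
  have hu (r : V1) (hr : IsDiscreteHarmonic V0h V1h d0 d1 r) :=
    abs_inner_le_of_isDiscreteHarmonic hsub hdd hπ0mem hπ1id hπ1bdd' hπcomm hPBrange hPBorth
      hμ0 (fun r hr => norm_sub_apply_le_sSup_mul_norm_of_isHarmonic hπ1bdd hr) hsol.2.2.2 y.2 hr
  have hY := graphNorm1_nonneg d1 (PB u - y)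
  refine (hcore hsol hdsol τ.2 v.2 q.2 (by positivity) hu).trans ?_
  rw [mul_assoc C (1 + max Cπ 0), graphNorm0_eq_graphNorm1]
  refine mul_le_mul_of_nonneg_left ?_ hC.le
  nlinarith [mul_nonneg hCπ (graphNorm1_nonneg d0 (σ - τ)),
    mul_nonneg hCπ (graphNorm1_nonneg d1 (u - v)), mul_nonneg hCπ (graphNorm1_nonneg d1 (p - q))]

/-- **Quasi-optimal error estimate for the discrete mixed semilinear problem**
(Theorem 4.2 of the paper): on a closed Hilbert complex segment with monotone,
`V`-Lipschitz nonlinearity `F`, the Galerkin solution on a finite-dimensional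
subcomplex admitting `V`-bounded cochain projections satisfies the same
quasi-optimal error bound as in the linear case. -/
theorem semilinear_subcomplex_error_estimate
    (V0 : Submodule ℝ W0) (V1 : Submodule ℝ W1)
    (d0 : V0 →ₗ[ℝ] W1) (d1 : V1 →ₗ[ℝ] W2)
    (hV0dense : Dense (V0 : Set W0)) (hV1dense : Dense (V1 : Set W1))
    (hgraph0 : IsClosed {p : W0 × W1 | ∃ τ : V0, (τ : W0) = p.1 ∧ d0 τ = p.2})
    (hgraph1 : IsClosed {p : W1 × W2 | ∃ v : V1, (v : W1) = p.1 ∧ d1 v = p.2})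
    (hsub : ∀ τ : V0, d0 τ ∈ V1)
    (hdd : ∀ τ : V0, d1 ⟨d0 τ, hsub τ⟩ = 0)
    (hBclosed : IsClosed (Set.range (⇑d0)))
    (hd1closed : IsClosed (Set.range (⇑d1)))
    -- the nonlinearity
    (F : V1 → W1) (CF : ℝ)
    (hFmono : ∀ v v' : V1, 0 ≤ ⟪F v - F v', (v : W1) - (v' : W1)⟫)
    (hFlip : ∀ v v' : V1, ‖F v - F v'‖ ≤ CF * graphNorm1 d1 (v - v'))
    -- the finite-dimensional subcomplex
    (V0h : Submodule ℝ V0) (V1h : Submodule ℝ V1)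
    (hfin0 : FiniteDimensional ℝ V0h) (hfin1 : FiniteDimensional ℝ V1h)
    (hd0h : ∀ τ : V0, τ ∈ V0h → (⟨d0 τ, hsub τ⟩ : V1) ∈ V1h)
    -- the bounded cochain projections
    (π0 : V0 →ₗ[ℝ] V0) (π1 : V1 →ₗ[ℝ] V1) (Cπ : ℝ)
    (hπ0mem : ∀ τ : V0, π0 τ ∈ V0h) (hπ1mem : ∀ v : V1, π1 v ∈ V1h)
    (hπ0id : ∀ τ : V0, τ ∈ V0h → π0 τ = τ) (hπ1id : ∀ v : V1, v ∈ V1h → π1 v = v)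
    (hπ0bdd : ∀ τ : V0, graphNorm0 d0 (π0 τ) ≤ Cπ * graphNorm0 d0 τ)
    (hπ1bdd : ∀ v : V1, graphNorm1 d1 (π1 v) ≤ Cπ * graphNorm1 d1 v)
    (hπcomm : ∀ τ : V0, π1 ⟨d0 τ, hsub τ⟩ = ⟨d0 (π0 τ), hsub (π0 τ)⟩)
    -- the `W1`-orthogonal projection onto `B = d0(V0)`
    (PB : W1 → V1)
    (hPBrange : ∀ w : W1, ∃ τ : V0, d0 τ = ((PB w : V1) : W1))
    (hPBorth : ∀ (w : W1) (τ : V0), ⟪w - (PB w : W1), d0 τ⟫ = 0) :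
    ∃ C : ℝ, 0 < C ∧ ∀ (f : W1) (σ σh : V0) (u p uh ph : V1),
      IsMixedSemilinearSolution V0 d0 d1 F f σ u p →
      IsDiscreteMixedSemilinearSolution V0h V1h d0 d1 F f σh uh ph →
      graphNorm0 d0 (σ - σh) + graphNorm1 d1 (u - uh) + ‖((p - ph : V1) : W1)‖ ≤
        C * ((⨅ τ : V0h, graphNorm0 d0 (σ - τ)) +
             (⨅ v : V1h, graphNorm1 d1 (u - v)) +
             (⨅ q : V1h, graphNorm1 d1 (p - q)) +
             sSup {t : ℝ | ∃ r : V1, IsHarmonic V0 d0 d1 r ∧ ‖(r : W1)‖ = 1 ∧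
                 t = ‖(r : W1) - ((π1 r : V1) : W1)‖} *
               (⨅ v : V1h, graphNorm1 d1 (PB (u : W1) - v))) :=
  semilinear_subcomplex_error_estimate_general V0 V1 d0 d1 hsub hdd F CF hFmono hFlip V0h V1h hfin0
    hfin1 hd0h π0 π1 Cπ hπ0mem hπ1id hπ1bdd hπcomm PB hPBrange hPBorth

end
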